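/- Let n, d ≥ 1 be integers, let α, β > 0 and γ ≠ 0, and let p, q, r satisfy 1 ≤ p ≤ 2 ≤ q ≤ ∞, 1 ≤ r ≤ 2(d+1)/(d+3), and not simultaneously d = 1, p = 2, q = 2. For μ > 0 with μ^{1/γ} ≥ 2 and each integer k ≥ 0 let μ_k be the unique λ > 0 with 1 + ((2k+n)λ)^α + λ^{2β} = μ^{1/γ}. Set E = n(1/p − 1/q) + d(1/r − 1/r′), σ = φ(1/p − 1/2) + φ(1/2 − 1/q), B = E/(αγ) − 1, and A = E/(2βγ) + (1/γ)(1/α − 1/(2β))(σ + 1) − 1. Then there is a constant C (depending on n, d, p, q, r, α, β, γ) such that for every μ > 0 with μ^{1/γ} ≥ 2: Σ_{k=0}^{∞} μ^{−1} μ_k^{E} (2k+n)^{σ} ≤ C μ^{B} whenever μ^{(1/α − 1/(2β))/γ} ≤ 1, and Σ_{k=0}^{∞} μ^{−1} μ_k^{E} (2k+n)^{σ} ≤ C μ^{A} whenever μ^{(1/α − 1/(2β))/γ} > 1. -/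

import Mathlib

open scoped ENNReal

/-- The piecewise-linear exponent function `φ` of Koch–Ricci:
`φ(s) = −s/2` for `s ≤ s* = 1/(2n+1)` and `φ(s) = ns − 1/2` for `s ≥ s*`. -/
noncomputable def phiKR (n : ℕ) (s : ℝ) : ℝ :=
  if s ≤ 1 / (2 * n + 1) then -s / 2 else n * s - 1 / 2

/-!
Put `ν = μ^{1/γ}`, `x_k = 2k + n` and `T = ν^{1/α - 1/(2β)}`. The equation for `μ_k` gives
`x_k μ_k ≤ ν^{1/α}` and `μ_k ≤ ν^{1/(2β)}`, that is `μ_k ≤ ν^{1/(2β)} min(T / x_k, 1)`, so the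
series is at most `μ⁻¹ ν^{E/(2β)} Σ_k min(T / x_k, 1)^E x_k^σ`. The restrictions on `p, q, r`
give `σ > -1` and the gap `E > σ + 1`. Bounding `min(T / x_k, 1) ≤ T / x_k` everywhere yields
`T^E Σ_k x_k^{σ-E} ≲ T^E`, the first estimate. For `T > 1` split the sum at `k ≈ T`: the head is
`≲ Σ_{k ≤ T} k^σ ≲ T^{σ+1}` because `σ > -1`, and the tail is `≲ T^E Σ_{k ≥ T} k^{σ-E} ≲ T^{σ+1}`
because `σ - E < -1`; this is the second estimate.
-/

open Real

lemma phiKR_eq_max (n : ℕ) (s : ℝ) : phiKR n s = max (-s / 2) (n * s - 1 / 2) := by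
  have hpos : (0 : ℝ) < 2 * n + 1 := by positivity
  unfold phiKR
  split_ifs with h
  · rw [le_div_iff₀ hpos] at h
    exact (max_eq_left (by linarith)).symm
  · rw [not_le, div_lt_iff₀ hpos] at h
    exact (max_eq_right (by linarith)).symm

lemma neg_div_two_le_phiKR (n : ℕ) (s : ℝ) : -s / 2 ≤ phiKR n s :=
  phiKR_eq_max n s ▸ le_max_left _ _

lemma phiKR_le_mul (n : ℕ) {s : ℝ} (hs : 0 ≤ s) : phiKR n s ≤ n * s := by
  rw [phiKR_eq_max]
  exact max_le (by nlinarith [n.cast_nonneg (α := ℝ)]) (by linarith)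

lemma phiKR_lt_mul (n : ℕ) {s : ℝ} (hs : 0 < s) : phiKR n s < n * s := by
  rw [phiKR_eq_max]
  exact max_lt (by nlinarith [n.cast_nonneg (α := ℝ)]) (by linarith)

lemma two_mul_div_add_one_le {d : ℕ} {r : ℝ} (hr : 0 < r) (hr2 : r ≤ 2 * (d + 1) / (d + 3)) :
    2 * d / (d + 1) ≤ d * (1 / r - (1 - 1 / r)) := by
  have hinv : (d + 3) / (2 * (d + 1)) ≤ 1 / r := by
    simpa using one_div_le_one_div_of_le hr hr2
  calc (2 * d / (d + 1) : ℝ) = d * (2 * ((d + 3) / (2 * (d + 1))) - 1) := by field_simp; ring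
    _ ≤ d * (1 / r - (1 - 1 / r)) := mul_le_mul_of_nonneg_left (by linarith) d.cast_nonneg

lemma neg_one_lt_phiKR_add_phiKR (n : ℕ) {p t : ℝ} (hp : 1 ≤ p) (ht : 0 ≤ t) :
    -1 < phiKR n (1 / p - 1 / 2) + phiKR n (1 / 2 - t) := by
  have : 1 / p ≤ 1 := by rw [div_le_one (by linarith)]; exact hp
  linarith [neg_div_two_le_phiKR n (1 / p - 1 / 2), neg_div_two_le_phiKR n (1 / 2 - t)]

lemma phiKR_add_phiKR_add_one_lt {n d : ℕ} (hd : 1 ≤ d) {p r t : ℝ} (hp : 0 < p) (hp2 : p ≤ 2)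
    (ht : t ≤ 1 / 2) (hr : 0 < r) (hr2 : r ≤ 2 * (d + 1) / (d + 3))
    (hne : d = 1 → p = 2 → t < 1 / 2) :
    phiKR n (1 / p - 1 / 2) + phiKR n (1 / 2 - t) + 1 <
      n * (1 / p - t) + d * (1 / r - (1 - 1 / r)) := by
  have hs₁ : 0 ≤ 1 / p - 1 / 2 := by
    have := one_div_le_one_div_of_le hp hp2; linarith
  have hφ₁ := phiKR_le_mul n hs₁
  have hφ₂ := phiKR_le_mul n (show 0 ≤ 1 / 2 - t by linarith)
  have hdr := two_mul_div_add_one_le hr hr2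
  -- for `d = 1` the `r`-term may be exactly `1`, and the strict inequality comes from `p` or `q`
  rcases hd.eq_or_lt with hd1 | hd2
  · have : (2 * d / (d + 1) : ℝ) = 1 := by rw [← hd1]; norm_num
    rcases hp2.eq_or_lt with rfl | hp2
    · linarith [phiKR_lt_mul n (show 0 < 1 / 2 - t by linarith [hne hd1.symm rfl])]
    · have : 0 < 1 / p - 1 / 2 := by
        have := one_div_lt_one_div_of_lt hp hp2; linarith
      linarith [phiKR_lt_mul n this]
  · have : 1 < (2 * d / (d + 1) : ℝ) := by
      rw [one_lt_div (by positivity)]; linarith [(show (2 : ℝ) ≤ d by exact_mod_cast hd2)]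
    linarith

namespace ENNReal

lemma toReal_inv_le_half {q : ℝ≥0∞} (hq : 2 ≤ q) : (q⁻¹).toReal ≤ 1 / 2 := by
  simpa using toReal_mono (by simp) (ENNReal.inv_le_inv.mpr hq)

lemma toReal_inv_lt_half {q : ℝ≥0∞} (hq : 2 < q) : (q⁻¹).toReal < 1 / 2 := by
  simpa using (toReal_lt_toReal (by simpa using (zero_le.trans_lt hq).ne') (by simp)).mpr
    (ENNReal.inv_lt_inv.mpr hq)

end ENNReal

lemma phiKR_exponent_gap {n d : ℕ} (hd : 1 ≤ d) {p r : ℝ} {q : ℝ≥0∞} (hp1 : 1 ≤ p) (hp2 : p ≤ 2)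
    (hq : 2 ≤ q) (hr1 : 1 ≤ r) (hr2 : r ≤ 2 * (d + 1) / (d + 3))
    (hne : ¬(d = 1 ∧ p = 2 ∧ q = 2)) :
    -1 < phiKR n (1 / p - 1 / 2) + phiKR n (1 / 2 - (q⁻¹).toReal) ∧
      phiKR n (1 / p - 1 / 2) + phiKR n (1 / 2 - (q⁻¹).toReal) + 1 <
        n * (1 / p - (q⁻¹).toReal) + d * (1 / r - (1 - 1 / r)) :=
  ⟨neg_one_lt_phiKR_add_phiKR n hp1 ENNReal.toReal_nonneg,
    phiKR_add_phiKR_add_one_lt hd (by linarith) hp2 (ENNReal.toReal_inv_le_half hq) (by linarith)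
      hr2 fun hd1 hp2' => ENNReal.toReal_inv_lt_half (hq.lt_of_ne fun h => hne ⟨hd1, hp2', h.symm⟩)⟩

lemma mul_add_one_rpow_sub_one_le {p x : ℝ} (hp0 : 0 ≤ p) (hp1 : p ≤ 1) (hx : 0 ≤ x) :
    p * (x + 1) ^ (p - 1) ≤ (x + 1) ^ p - x ^ p := by
  have hx1 : 0 < x + 1 := by linarith
  -- Bernoulli's inequality at `-1 / (x + 1)`: the tangent of the concave `t ↦ t ^ p` at `x + 1`
  have hbern := rpow_one_add_le_one_add_mul_self (s := -1 / (x + 1))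
    (by rw [neg_div, neg_le_neg_iff, div_le_one hx1]; linarith) hp0 hp1
  rw [show 1 + -1 / (x + 1) = x / (x + 1) by field_simp; ring, div_rpow hx hx1.le,
    div_le_iff₀ (by positivity)] at hbern
  rw [rpow_sub_one hx1.ne']
  have : (1 + p * (-1 / (x + 1))) * (x + 1) ^ p = (x + 1) ^ p - p * ((x + 1) ^ p / (x + 1)) := by
    field_simp; ring
  linarith

lemma sum_range_add_one_rpow_le {s : ℝ} (hs : -1 < s) (hs0 : s ≤ 0) (N : ℕ) :
    ∑ k ∈ Finset.range N, ((k : ℝ) + 1) ^ s ≤ (N : ℝ) ^ (s + 1) / (s + 1) := by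
  have hs1 : 0 < s + 1 := by linarith
  calc ∑ k ∈ Finset.range N, ((k : ℝ) + 1) ^ s
      ≤ ∑ k ∈ Finset.range N,
          ((((k + 1 : ℕ) : ℝ) ^ (s + 1) - ((k : ℕ) : ℝ) ^ (s + 1)) / (s + 1)) := by
        gcongr with k
        rw [le_div_iff₀ hs1, mul_comm, Nat.cast_succ]
        simpa using mul_add_one_rpow_sub_one_le hs1.le (by linarith) k.cast_nonneg
    _ = (N : ℝ) ^ (s + 1) / (s + 1) := by
        rw [← Finset.sum_div, Finset.sum_range_sub (fun k : ℕ => (k : ℝ) ^ (s + 1))]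
        simp [zero_rpow hs1.ne']

lemma tsum_nat_add_rpow_le {c : ℝ} (hc : c < -1) {N : ℕ} (hN : 0 < N) :
    ∑' k : ℕ, ((k + N + 1 : ℕ) : ℝ) ^ c ≤ (N : ℝ) ^ (c + 1) / -(c + 1) := by
  have hN' : (0 : ℝ) < N := by exact_mod_cast hN
  have := AntitoneOn.tsum_comp_add_le_integral N (f := fun t : ℝ => t ^ c)
    ((antitoneOn_rpow_Ioi_of_exponent_nonpos (by linarith)).mono (Set.Ici_subset_Ioi.mpr hN'))
    (integrableOn_Ioi_rpow_of_lt hc hN') (fun t ht => rpow_nonneg (hN'.trans ht).le _)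
  rwa [integral_Ioi_rpow_of_lt hc hN', neg_div, ← div_neg] at this

lemma summable_nat_add_one_rpow {c : ℝ} (hc : c < -1) :
    Summable fun k : ℕ => ((k : ℝ) + 1) ^ c := by
  exact_mod_cast (summable_nat_add_iff 1).mpr (summable_nat_rpow.mpr hc)

section WeightedSums

variable {E σ T : ℝ}

lemma min_div_rpow_mul_rpow_le_rpow_mul_rpow_sub {x : ℝ} (hx : 0 < x) (hT : 0 ≤ T)
    (hE : 0 ≤ E) : min (T / x) 1 ^ E * x ^ σ ≤ T ^ E * x ^ (σ - E) := by
  calc min (T / x) 1 ^ E * x ^ σ ≤ (T / x) ^ E * x ^ σ := by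
        gcongr ?_ * _
        exact rpow_le_rpow (le_min (by positivity) zero_le_one) (min_le_left _ _) hE
    _ = T ^ E * x ^ (σ - E) := by
        rw [div_rpow hT hx.le, rpow_sub hx]; ring

lemma min_div_rpow_mul_rpow_le_rpow_mul_rpow {x s : ℝ} (hx : 0 < x) (hT : 0 ≤ T) (hs : s ≤ σ)
    (hsE : σ - s ≤ E) : min (T / x) 1 ^ E * x ^ σ ≤ T ^ (σ - s) * x ^ s := by
  have hm0 : 0 ≤ min (T / x) 1 := le_min (by positivity) zero_le_one
  calc min (T / x) 1 ^ E * x ^ σ ≤ min (T / x) 1 ^ (σ - s) * x ^ σ := by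
        gcongr ?_ * _
        exact rpow_le_rpow_of_exponent_ge' hm0 (min_le_right _ _) (by linarith) hsE
    _ = (min (T / x) 1 * x) ^ (σ - s) * x ^ s := by
        rw [mul_rpow hm0 hx.le, mul_assoc, ← rpow_add hx, sub_add_cancel]
    _ ≤ T ^ (σ - s) * x ^ s := by
        gcongr ?_ * _
        refine rpow_le_rpow (by positivity) ?_ (by linarith)
        rw [min_mul_of_nonneg _ _ hx.le, div_mul_cancel₀ _ hx.ne']
        exact min_le_left _ _

variable {x : ℕ → ℝ}

lemma min_div_rpow_mul_rpow_le_of_le (hx : ∀ k : ℕ, (k : ℝ) + 1 ≤ x k) (hT : 0 ≤ T)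
    (hE : 0 ≤ E) (hσE : σ ≤ E) (k : ℕ) :
    min (T / x k) 1 ^ E * x k ^ σ ≤ T ^ E * ((k : ℝ) + 1) ^ (σ - E) := by
  have hk : (0 : ℝ) < k + 1 := by positivity
  refine (min_div_rpow_mul_rpow_le_rpow_mul_rpow_sub (hk.trans_le (hx k)) hT hE).trans ?_
  gcongr T ^ E * ?_
  exact rpow_le_rpow_of_nonpos hk (hx k) (by linarith)

lemma summable_min_div_rpow_mul_rpow (hx : ∀ k : ℕ, (k : ℝ) + 1 ≤ x k) (hT : 0 ≤ T)
    (hE : 0 ≤ E) (hσE : σ + 1 < E) : Summable fun k => min (T / x k) 1 ^ E * x k ^ σ := by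
  have hpos : ∀ k, 0 < x k := fun k => (k.cast_add_one_pos).trans_le (hx k)
  exact Summable.of_nonneg_of_le (fun k => by have := hpos k; positivity)
    (min_div_rpow_mul_rpow_le_of_le hx hT hE (by linarith))
    ((summable_nat_add_one_rpow (by linarith)).mul_left _)

lemma tsum_min_div_rpow_mul_rpow_le_rpow_mul (hx : ∀ k : ℕ, (k : ℝ) + 1 ≤ x k) (hT : 0 ≤ T)
    (hE : 0 ≤ E) (hσE : σ + 1 < E) :
    ∑' k, min (T / x k) 1 ^ E * x k ^ σ ≤ T ^ E * ∑' k : ℕ, ((k : ℝ) + 1) ^ (σ - E) := by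
  rw [← tsum_mul_left]
  exact (summable_min_div_rpow_mul_rpow hx hT hE hσE).tsum_le_tsum
    (min_div_rpow_mul_rpow_le_of_le hx hT hE (by linarith))
    ((summable_nat_add_one_rpow (by linarith)).mul_left _)

theorem tsum_min_div_rpow_mul_rpow_le (hx : ∀ k : ℕ, (k : ℝ) + 1 ≤ x k) {s : ℝ} (hs : -1 < s)
    (hs0 : s ≤ 0) (hsσ : s ≤ σ) (hσE : σ + 1 < E) (hT : 1 ≤ T) :
    ∑' k, min (T / x k) 1 ^ E * x k ^ σ ≤ (2 / (s + 1) + 1 / (E - σ - 1)) * T ^ (σ + 1) := by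
  have hT0 : 0 < T := by linarith
  have hs1 : 0 < s + 1 := by linarith
  have hE : 0 ≤ E := by linarith
  have hpos : ∀ k, 0 < x k := fun k => (k.cast_add_one_pos).trans_le (hx k)
  set N := ⌈T⌉₊
  have hTN : T ≤ N := Nat.le_ceil T
  have hN0 : 0 < N := Nat.ceil_pos.mpr hT0
  have hN2 : (N : ℝ) ≤ 2 * T := by linarith [Nat.ceil_lt_add_one hT0.le]
  have head :
      ∑ k ∈ Finset.range N, min (T / x k) 1 ^ E * x k ^ σ ≤ 2 / (s + 1) * T ^ (σ + 1) :=
    calc ∑ k ∈ Finset.range N, min (T / x k) 1 ^ E * x k ^ σ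
        ≤ ∑ k ∈ Finset.range N, T ^ (σ - s) * ((k : ℝ) + 1) ^ s := by
          refine Finset.sum_le_sum fun k _ => ?_
          refine (min_div_rpow_mul_rpow_le_rpow_mul_rpow (hpos k) hT0.le hsσ
            (by linarith : σ - s ≤ E)).trans ?_
          gcongr T ^ (σ - s) * ?_
          exact rpow_le_rpow_of_nonpos k.cast_add_one_pos (hx k) hs0
      _ ≤ T ^ (σ - s) * ((2 * T) ^ (s + 1) / (s + 1)) := by
          rw [← Finset.mul_sum]
          gcongr
          refine (sum_range_add_one_rpow_le hs hs0 N).trans ?_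
          gcongr
      _ ≤ 2 / (s + 1) * T ^ (σ + 1) := by
          have h2 : (2 : ℝ) ^ (s + 1) ≤ 2 := by
            simpa using rpow_le_rpow_of_exponent_le one_le_two (by linarith : s + 1 ≤ 1)
          calc T ^ (σ - s) * ((2 * T) ^ (s + 1) / (s + 1))
              = 2 ^ (s + 1) / (s + 1) * (T ^ (σ - s) * T ^ (s + 1)) := by
                rw [mul_rpow zero_le_two hT0.le]; ring
            _ ≤ 2 / (s + 1) * T ^ (σ + 1) := by
                rw [← rpow_add hT0, show σ - s + (s + 1) = σ + 1 by ring]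
                gcongr
  have tail :
      ∑' k, min (T / x (k + N)) 1 ^ E * x (k + N) ^ σ ≤ 1 / (E - σ - 1) * T ^ (σ + 1) :=
    calc ∑' k, min (T / x (k + N)) 1 ^ E * x (k + N) ^ σ
        ≤ ∑' k : ℕ, T ^ E * ((k + N + 1 : ℕ) : ℝ) ^ (σ - E) := by
          refine Summable.tsum_le_tsum (fun k => ?_)
            ((summable_nat_add_iff N).mpr (summable_min_div_rpow_mul_rpow hx hT0.le hE hσE))
            (((summable_nat_add_iff (N + 1)).mpr
              (summable_nat_rpow.mpr (by linarith))).mul_left _)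
          simpa using min_div_rpow_mul_rpow_le_of_le hx hT0.le hE (by linarith) (k + N)
      _ ≤ T ^ E * (T ^ (σ - E + 1) / (E - σ - 1)) := by
          rw [tsum_mul_left]
          gcongr
          refine (tsum_nat_add_rpow_le (by linarith) hN0).trans ?_
          rw [show -(σ - E + 1) = E - σ - 1 by ring]
          exact div_le_div_of_nonneg_right (rpow_le_rpow_of_nonpos hT0 hTN (by linarith))
            (by linarith)
      _ = 1 / (E - σ - 1) * T ^ (σ + 1) := by
          rw [← mul_div_assoc, ← rpow_add hT0]; ring_nf
  rw [← (summable_min_div_rpow_mul_rpow hx hT0.le hE hσE).sum_add_tsum_nat_add N, add_mul]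
  exact add_le_add head tail

end WeightedSums

lemma le_rpow_one_div_of_rpow_le {y ν a : ℝ} (hy : 0 ≤ y) (ha : 0 < a) (h : y ^ a ≤ ν) :
    y ≤ ν ^ (1 / a) := by
  rw [one_div, le_rpow_inv_iff_of_pos hy ((rpow_nonneg hy a).trans h) ha]
  exact h

lemma rpow_le_of_one_add_rpow_add_rpow_eq {a b E x lam ν : ℝ} (ha : 0 < a) (hb : 0 < b)
    (hE : 0 ≤ E) (hx : 0 < x) (hlam : 0 < lam) (h : 1 + (x * lam) ^ a + lam ^ b = ν) :
    lam ^ E ≤ ν ^ (E / b) * min (ν ^ (1 / a - 1 / b) / x) 1 ^ E := by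
  have hxa : 0 ≤ (x * lam) ^ a := by positivity
  have hlb : 0 ≤ lam ^ b := by positivity
  have hν : 0 < ν := by linarith
  have h₁ : x * lam ≤ ν ^ (1 / a) := le_rpow_one_div_of_rpow_le (by positivity) ha (by linarith)
  have h₂ : lam ≤ ν ^ (1 / b) := le_rpow_one_div_of_rpow_le hlam.le hb (by linarith)
  have hmin : lam ≤ ν ^ (1 / b) * min (ν ^ (1 / a - 1 / b) / x) 1 := by
    rw [mul_min_of_nonneg _ _ (by positivity), mul_one, mul_div_assoc', ← rpow_add hν,
      add_sub_cancel]
    exact le_min ((le_div_iff₀ hx).mpr (by linarith)) h₂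
  calc lam ^ E ≤ (ν ^ (1 / b) * min (ν ^ (1 / a - 1 / b) / x) 1) ^ E :=
        rpow_le_rpow hlam.le hmin hE
    _ = ν ^ (E / b) * min (ν ^ (1 / a - 1 / b) / x) 1 ^ E := by
        rw [mul_rpow (by positivity) (le_min (by positivity) zero_le_one), ← rpow_mul hν.le,
          one_div_mul_eq_div]

lemma tsum_rpow_mul_rpow_le_of_eq {a b E σ ν : ℝ} {x lam : ℕ → ℝ} (ha : 0 < a) (hb : 0 < b)
    (hE : 0 ≤ E) (hσE : σ + 1 < E) (hx : ∀ k : ℕ, (k : ℝ) + 1 ≤ x k)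
    (hlam : ∀ k, 0 < lam k ∧ 1 + (x k * lam k) ^ a + lam k ^ b = ν) :
    ∑' k, lam k ^ E * x k ^ σ ≤
      ν ^ (E / b) * ∑' k, min (ν ^ (1 / a - 1 / b) / x k) 1 ^ E * x k ^ σ := by
  have hpos : ∀ k, 0 < x k := fun k => (k.cast_add_one_pos).trans_le (hx k)
  have hν : 0 < ν := by
    obtain ⟨h0, h⟩ := hlam 0
    rw [← h]; have := hpos 0; positivity
  have hle : ∀ k, lam k ^ E * x k ^ σ ≤
      ν ^ (E / b) * (min (ν ^ (1 / a - 1 / b) / x k) 1 ^ E * x k ^ σ) := fun k => by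
    rw [← mul_assoc]
    have := hpos k
    exact mul_le_mul_of_nonneg_right
      (rpow_le_of_one_add_rpow_add_rpow_eq ha hb hE this (hlam k).1 (hlam k).2) (by positivity)
  have hsum := (summable_min_div_rpow_mul_rpow (T := ν ^ (1 / a - 1 / b)) hx (by positivity)
    hE hσE).mul_left (ν ^ (E / b))
  rw [← tsum_mul_left]
  exact (Summable.of_nonneg_of_le (fun k => by have := (hlam k).1; have := hpos k; positivity)
    hle hsum).tsum_le_tsum hle hsum

lemma inv_mul_rpow_mul_rpow {μ : ℝ} (hμ : 0 < μ) (a b : ℝ) :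
    μ⁻¹ * (μ ^ a * μ ^ b) = μ ^ (a + b - 1) := by
  rw [← rpow_add hμ, rpow_sub_one hμ.ne', div_eq_inv_mul]

theorem series_bound_inhomogeneous_large_general (n d : ℕ) (hn : 1 ≤ n) (hd : 1 ≤ d)
    (α β γ : ℝ) (hα : 0 < α) (hβ : 0 < β)
    (p r : ℝ) (q : ℝ≥0∞)
    (hp1 : 1 ≤ p) (hp2 : p ≤ 2) (hq : 2 ≤ q)
    (hr1 : 1 ≤ r) (hr2 : r ≤ 2 * (d + 1) / (d + 3))
    (hne : ¬(d = 1 ∧ p = 2 ∧ q = 2)) :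
    ∃ C : ℝ, ∀ μ : ℝ, 0 < μ → 2 ≤ μ ^ (1 / γ) → ∀ muk : ℕ → ℝ,
      (∀ k : ℕ, 0 < muk k ∧
        1 + ((2 * (k : ℝ) + n) * muk k) ^ α + (muk k) ^ (2 * β) = μ ^ (1 / γ)) →
      (let E : ℝ := n * (1 / p - (q⁻¹).toReal) + d * (1 / r - (1 - 1 / r))
       let σ : ℝ := phiKR n (1 / p - 1 / 2) + phiKR n (1 / 2 - (q⁻¹).toReal)
       (μ ^ ((1 / α - 1 / (2 * β)) / γ) ≤ 1 →
          ∑' k : ℕ, μ⁻¹ * (muk k) ^ E * (2 * (k : ℝ) + n) ^ σ ≤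
            C * μ ^ (E / (α * γ) - 1)) ∧
       (1 < μ ^ ((1 / α - 1 / (2 * β)) / γ) →
          ∑' k : ℕ, μ⁻¹ * (muk k) ^ E * (2 * (k : ℝ) + n) ^ σ ≤
            C * μ ^ (E / (2 * β * γ) + (1 / γ) * (1 / α - 1 / (2 * β)) * (σ + 1) - 1))) := by
  obtain ⟨hσ, hσE⟩ := phiKR_exponent_gap (n := n) hd hp1 hp2 hq hr1 hr2 hne
  set σ := phiKR n (1 / p - 1 / 2) + phiKR n (1 / 2 - (q⁻¹).toReal)
  set E := (n : ℝ) * (1 / p - (q⁻¹).toReal) + d * (1 / r - (1 - 1 / r))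
  have hx : ∀ k : ℕ, (k : ℝ) + 1 ≤ 2 * k + n := fun k => by
    have : (1 : ℝ) ≤ n := by exact_mod_cast hn
    linarith [k.cast_nonneg (α := ℝ)]
  set Z := ∑' k : ℕ, ((k : ℝ) + 1) ^ (σ - E)
  set C := 2 / (min σ 0 + 1) + 1 / (E - σ - 1)
  refine ⟨max Z C, fun μ hμ _ muk hmuk => ?_⟩
  set T := μ ^ ((1 / α - 1 / (2 * β)) / γ)
  have hsum := tsum_rpow_mul_rpow_le_of_eq hα (by positivity) (by linarith) hσE hx hmuk
  rw [← rpow_mul hμ.le, ← rpow_mul hμ.le, one_div_mul_eq_div, one_div_mul_eq_div] at hsum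
  have bound : ∀ K y,
      ∑' k : ℕ, min (T / (2 * k + n)) 1 ^ E * (2 * (k : ℝ) + n) ^ σ ≤ K * T ^ y → K ≤ max Z C →
      ∑' k : ℕ, μ⁻¹ * muk k ^ E * (2 * (k : ℝ) + n) ^ σ ≤
        max Z C * μ ^ (E / (2 * β) / γ + (1 / α - 1 / (2 * β)) / γ * y - 1) := by
    intro K y hK hKC
    simp_rw [mul_assoc, tsum_mul_left]
    calc _ ≤ μ⁻¹ * (μ ^ (E / (2 * β) / γ) * (K * T ^ y)) := by
          gcongr; exact hsum.trans (by gcongr)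
      _ = K * μ ^ (E / (2 * β) / γ + (1 / α - 1 / (2 * β)) / γ * y - 1) := by
        rw [mul_left_comm _ K, mul_left_comm _ K, ← rpow_mul hμ.le, inv_mul_rpow_mul_rpow hμ]
      _ ≤ _ := by gcongr
  constructor
  · intro _
    convert bound Z E (mul_comm (T ^ E) Z ▸ tsum_min_div_rpow_mul_rpow_le_rpow_mul hx
      (by positivity) (by linarith) hσE) (le_max_left _ _) using 3
    ring
  · intro hT
    convert bound C (σ + 1) (tsum_min_div_rpow_mul_rpow_le hx (by simpa using hσ)
      (min_le_right _ _) (min_le_left _ _) hσE hT.le) (le_max_right _ _) using 3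
    ring

/-- Analytic core of the first two cases of Theorem 2.11 (regime `μ^{1/γ} ≥ 2`):
with `μ_k` the unique positive solution of `1 + ((2k+n)λ)^α + λ^(2β) = μ^(1/γ)`,
`E = n(1/p−1/q) + d(1/r−1/r′)`, `σ = φ(1/p−1/2) + φ(1/2−1/q)`, `B = E/(αγ) − 1` and
`A = E/(2βγ) + (1/γ)(1/α − 1/(2β))(σ+1) − 1`, one has
`Σ_k μ⁻¹ μ_k^E (2k+n)^σ ≤ C μ^B` if `μ^{(1/α−1/(2β))/γ} ≤ 1` and `≤ C μ^A` otherwise. -/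
theorem series_bound_inhomogeneous_large (n d : ℕ) (hn : 1 ≤ n) (hd : 1 ≤ d)
    (α β γ : ℝ) (hα : 0 < α) (hβ : 0 < β) (hγ : γ ≠ 0)
    (p r : ℝ) (q : ℝ≥0∞)
    (hp1 : 1 ≤ p) (hp2 : p ≤ 2) (hq : 2 ≤ q)
    (hr1 : 1 ≤ r) (hr2 : r ≤ 2 * (d + 1) / (d + 3))
    (hne : ¬(d = 1 ∧ p = 2 ∧ q = 2)) :
    ∃ C : ℝ, ∀ μ : ℝ, 0 < μ → 2 ≤ μ ^ (1 / γ) → ∀ muk : ℕ → ℝ,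
      (∀ k : ℕ, 0 < muk k ∧
        1 + ((2 * (k : ℝ) + n) * muk k) ^ α + (muk k) ^ (2 * β) = μ ^ (1 / γ)) →
      (let E : ℝ := n * (1 / p - (q⁻¹).toReal) + d * (1 / r - (1 - 1 / r))
       let σ : ℝ := phiKR n (1 / p - 1 / 2) + phiKR n (1 / 2 - (q⁻¹).toReal)
       (μ ^ ((1 / α - 1 / (2 * β)) / γ) ≤ 1 →
          ∑' k : ℕ, μ⁻¹ * (muk k) ^ E * (2 * (k : ℝ) + n) ^ σ ≤
            C * μ ^ (E / (α * γ) - 1)) ∧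
       (1 < μ ^ ((1 / α - 1 / (2 * β)) / γ) →
          ∑' k : ℕ, μ⁻¹ * (muk k) ^ E * (2 * (k : ℝ) + n) ^ σ ≤
            C * μ ^ (E / (2 * β * γ) + (1 / γ) * (1 / α - 1 / (2 * β)) * (σ + 1) - 1))) :=
  series_bound_inhomogeneous_large_general n d hn hd α β γ hα hβ p r q hp1 hp2 hq hr1 hr2 hne
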